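/- arXiv:2509.05137 — 3 statements merged into one kernel-verified Lean document; each statement's English description precedes it below -/
import Mathlib

section
/- For every monotone function g : ℕ → ℕ, the class C_g is realizably PAC learnable with sample complexity m(ε,δ) ≤ log(1/δ)·g(1/ε); that is, there exists a learner A from finite multisets over ℕ×ℕ to distributions on ℕ×ℕ such that for every p ∈ C_g, every ε,δ ∈ (0,1), and every m ≥ log(1/δ)·g(1/ε), with probability at least 1−δ over an i.i.d. sample S ∼ p^m we have d_TV(A(S), p) ≤ ε. -/
open scoped ENNReal NNReal

/-- Total variation distance between two discrete distributions. -/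
noncomputable def tv {X : Type*} (p q : PMF X) : ℝ :=
  (∑' x, |(p x).toReal - (q x).toReal|) / 2

/-- The distribution of an i.i.d. sample of size `m` from `p`, viewed as a multiset. -/
noncomputable def iid {X : Type*} (p : PMF X) : ℕ → PMF (Multiset X)
  | 0 => PMF.pure 0
  | n + 1 => (iid p n).bind fun s => p.map fun x => x ::ₘ s

/-- `|Q|^m` : first draw `q ∼ Q`, then an i.i.d. sample `S ∼ q^m`. -/
noncomputable def metaSample {X : Type*} (Q : PMF (PMF X)) (m : ℕ) : PMF (Multiset X) :=
  Q.bind fun q => iid q m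

/-- An adaptive adversary: a randomized map from samples (finite multisets) to samples. -/
abbrev Adversary (X : Type*) := Multiset X → PMF (Multiset X)

/-- `V(P)`: the distribution of `V S` for `S ∼ P` (including internal randomness). -/
noncomputable def advPush {X : Type*} (V : Adversary X) (P : PMF (Multiset X)) :
    PMF (Multiset X) := P.bind V

/-- An additive adversary only adds points: `S ⊆ V(S)` almost surely. -/
def IsAdditive {X : Type*} (V : Adversary X) : Prop :=
  ∀ S T, T ∈ (V S).support → S ≤ T

/-- A subtractive adversary only removes points: `V(S) ⊆ S` almost surely. -/
def IsSubtractive {X : Type*} (V : Adversary X) : Prop :=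
  ∀ S T, T ∈ (V S).support → T ≤ S

/-- Fixed constant budget `η`: `|V(S)|` depends only on `|S|` (via `c`), and for every `m`,
`η m − 1 < m·budget(V,m) ≤ η m` where `m·budget(V,m) = ||V(S)| − |S||`. -/
def FixedBudget {X : Type*} (V : Adversary X) (η : ℝ) : Prop :=
  ∃ c : ℕ → ℕ, (∀ S T, T ∈ (V S).support → Multiset.card T = c (Multiset.card S)) ∧
    ∀ m : ℕ, η * m - 1 < |(c m : ℝ) - m| ∧ |(c m : ℝ) - m| ≤ η * m

/-- Fixed constant budget `η` for an additive adversary (`m·budget(V,m) = |V(S)| − |S|`). -/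
def FixedBudgetAdd {X : Type*} (V : Adversary X) (η : ℝ) : Prop :=
  ∃ c : ℕ → ℕ, (∀ S T, T ∈ (V S).support → Multiset.card T = c (Multiset.card S)) ∧
    ∀ m : ℕ, η * m - 1 < (c m : ℝ) - m ∧ (c m : ℝ) - m ≤ η * m

/-- Fixed constant budget `η` for a subtractive adversary (`m·budget(V,m) = |S| − |V(S)|`). -/
def FixedBudgetSub {X : Type*} (V : Adversary X) (η : ℝ) : Prop :=
  ∃ c : ℕ → ℕ, (∀ S T, T ∈ (V S).support → Multiset.card T = c (Multiset.card S)) ∧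
    ∀ m : ℕ, η * m - 1 < (m : ℝ) - c m ∧ (m : ℝ) - c m ≤ η * m

/-- Probability of an event under a discrete distribution. -/
noncomputable def probEvent {β : Type*} (P : PMF β) (E : Set β) : ℝ≥0∞ :=
  P.toOuterMeasure E

/-- `A` with sample complexity `mc` learns the class `C` against adversary `V`,
up to error `bound + ε` with confidence `1 − δ` once `m ≥ mc ε δ`. -/
def RobustLearnerFor {X : Type*} (C : Set (PMF X)) (A : Multiset X → PMF X)
    (mc : ℝ → ℝ → ℕ) (V : Adversary X) (bound : ℝ) : Prop :=
  ∀ p ∈ C, ∀ ε δ : ℝ, 0 < ε → ε < 1 → 0 < δ → δ < 1 →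
    ∀ m : ℕ, mc ε δ ≤ m →
      1 - ENNReal.ofReal δ ≤
        probEvent ((iid p m).bind V) {T | tv (A T) p ≤ bound + ε}

/-- `C` is adaptively α-robustly learnable w.r.t. the single adversary `V` with budget `η`. -/
def RobustlyLearnableWrt {X : Type*} (C : Set (PMF X)) (α : ℝ)
    (V : Adversary X) (η : ℝ) : Prop :=
  ∃ A mc, RobustLearnerFor C A mc V (α * η)

/-- `V` (with budget `η`) is a universal α-adversary for `C`. -/
def UniversalAdversary {X : Type*} (C : Set (PMF X)) (α : ℝ)
    (V : Adversary X) (η : ℝ) : Prop :=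
  ¬ RobustlyLearnableWrt C α V η

/-- `C` is adaptively α-robustly learnable w.r.t. a class `𝒱` of adversaries
(each given with its budget). -/
def RobustlyLearnableWrtClass {X : Type*} (C : Set (PMF X)) (α : ℝ)
    (𝒱 : Set (Adversary X × ℝ)) : Prop :=
  ∃ A mc, ∀ Vη ∈ 𝒱, RobustLearnerFor C A mc Vη.1 (α * Vη.2)

/-- `C` is adaptively additively α-robustly learnable: one learner works simultaneously
against all additive adaptive adversaries with fixed constant budgets. -/
def AdditivelyRobustlyLearnable {X : Type*} (C : Set (PMF X)) (α : ℝ) : Prop :=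
  ∃ A mc, ∀ V : Adversary X, ∀ η : ℝ, 0 < η → η < 1 →
    IsAdditive V → FixedBudgetAdd V η → RobustLearnerFor C A mc V (α * η)

/-- `C` is adaptively subtractively α-robustly learnable. -/
def SubtractivelyRobustlyLearnable {X : Type*} (C : Set (PMF X)) (α : ℝ) : Prop :=
  ∃ A mc, ∀ V : Adversary X, ∀ η : ℝ, 0 < η → η < 1 →
    IsSubtractive V → FixedBudgetSub V η → RobustLearnerFor C A mc V (α * η)

/-- The pair `(V1, V2)` successfully `(γ,ζ)`-confuses `C`-generated samples of size `m`. -/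
def ConfusesPair {X : Type*} (C : Set (PMF X)) (V1 V2 : Adversary X)
    (γ ζ : ℝ) (m : ℕ) : Prop :=
  ∃ p ∈ C, ∃ Q : PMF (PMF X), Q.support ⊆ C ∧
    (∀ q ∈ Q.support, γ < tv p q) ∧
    tv (advPush V1 (metaSample Q m)) (advPush V2 (iid p m)) < ζ

/-- A single adversary `V` successfully `(γ,ζ)`-confuses `C`-generated samples of size `m`. -/
def Confuses {X : Type*} (C : Set (PMF X)) (V : Adversary X) (γ ζ : ℝ) (m : ℕ) : Prop :=
  ConfusesPair C V V γ ζ m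

/-- `p` is the distribution `p_{i,j,k} = (1 − 1/j)·δ_{(0,0)} + (1/j − 1/k)·U_{B_i×{2j+1}}
 + (1/k)·δ_{(i,2j+2)}` on `ℕ × ℕ`. -/
def IsPijk (B : ℕ → Finset ℕ) (i j k : ℕ) (p : PMF (ℕ × ℕ)) : Prop :=
  ∀ x : ℕ × ℕ,
    p x = (1 - ((j : ℝ≥0∞))⁻¹) * (if x = (0, 0) then 1 else 0)
      + (((j : ℝ≥0∞))⁻¹ - ((k : ℝ≥0∞))⁻¹) *
          (if x.1 ∈ B i ∧ x.2 = 2 * j + 1 then (((B i).card : ℝ≥0∞))⁻¹ else 0)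
      + ((k : ℝ≥0∞))⁻¹ * (if x = (i, 2 * j + 2) then 1 else 0)

/-- The class `C_g = {p_{i,j,g(j)} : i, j ∈ ℕ}` (for the meaningful parameters). -/
def Cg (B : ℕ → Finset ℕ) (g : ℕ → ℕ) : Set (PMF (ℕ × ℕ)) :=
  {p | ∃ i j : ℕ, 1 ≤ j ∧ j < g j ∧ (B i).Nonempty ∧ IsPijk B i j (g j) p}

/-- `g` is superlinear: `g(n)/n → ∞`. -/
def Superlinear (g : ℕ → ℕ) : Prop :=
  Filter.Tendsto (fun n => (g n : ℝ) / n) Filter.atTop Filter.atTop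

section Aux
variable {X : Type*}

lemma pmf_event_add_compl (P : PMF X) (E : Set X) :
    P.toOuterMeasure E + P.toOuterMeasure Eᶜ = 1 := by
  rw [PMF.toOuterMeasure_apply, PMF.toOuterMeasure_apply, ← ENNReal.tsum_add]
  rw [← P.tsum_coe]
  refine tsum_congr fun x => ?_
  by_cases hx : x ∈ E <;> simp [Set.indicator, hx]

lemma pmf_compl (P : PMF X) (E : Set X) :
    P.toOuterMeasure Eᶜ = 1 - P.toOuterMeasure E := by
  refine ENNReal.eq_sub_of_add_eq ?_ ?_
  · exact ne_top_of_le_ne_top ENNReal.one_ne_top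
      (le_of_le_of_eq le_self_add (pmf_event_add_compl P E))
  · rw [add_comm]; exact pmf_event_add_compl P E

lemma pmf_one_sub_compl_le (P : PMF X) (E : Set X) :
    1 - P.toOuterMeasure Eᶜ ≤ P.toOuterMeasure E := by
  rw [tsub_le_iff_right, ← pmf_event_add_compl P E]

lemma iid_support (p : PMF X) (m : ℕ) :
    ∀ S ∈ (iid p m).support, ∀ x ∈ S, x ∈ p.support := by
  induction m with
  | zero => intro S hS x hx; simp [iid] at hS; subst hS; simp at hx
  | succ n ih =>
    intro S hS x hx
    rw [iid] at hS
    simp only [PMF.support_bind, PMF.support_map, Set.mem_iUnion, Set.mem_image] at hS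
    obtain ⟨s, hs, y, hy, rfl⟩ := hS
    rcases Multiset.mem_cons.1 hx with h | h
    · exact h ▸ hy
    · exact ih s hs x h

lemma pmf_compl_singleton (p : PMF X) (x₀ : X) :
    p.toOuterMeasure ({x₀}ᶜ) = 1 - p x₀ := by
  rw [pmf_compl, PMF.toOuterMeasure_apply_singleton]

lemma iid_miss (p : PMF X) (x₀ : X) (m : ℕ) :
    (iid p m).toOuterMeasure {S | x₀ ∉ S} = (1 - p x₀) ^ m := by
  induction m with
  | zero =>
    rw [iid, PMF.toOuterMeasure_pure_apply]
    simp
  | succ n ih =>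
    rw [iid, PMF.toOuterMeasure_bind_apply]
    have key : ∀ s : Multiset X,
        (p.map fun x => x ::ₘ s).toOuterMeasure {S | x₀ ∉ S}
          = (1 - p x₀) * ({S : Multiset X | x₀ ∉ S}.indicator (fun _ => 1) s) := by
      intro s
      rw [PMF.toOuterMeasure_map_apply]
      by_cases hs : x₀ ∈ s
      · have : ((fun x => x ::ₘ s) ⁻¹' {S | x₀ ∉ S}) = ∅ := by
          ext x; simp [Multiset.mem_cons, hs]
        rw [this]
        simp [Set.indicator, hs]
      · have : ((fun x => x ::ₘ s) ⁻¹' {S | x₀ ∉ S}) = {x₀}ᶜ := by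
          ext x; simp [Multiset.mem_cons, hs, eq_comm]
        rw [this, pmf_compl_singleton]
        simp [Set.indicator, hs]
    calc ∑' s, iid p n s * (p.map fun x => x ::ₘ s).toOuterMeasure {S | x₀ ∉ S}
        = ∑' s, (1 - p x₀) * ({S : Multiset X | x₀ ∉ S}.indicator (iid p n) s) := by
          refine tsum_congr fun s => ?_
          rw [key s]
          by_cases hs : x₀ ∈ s <;> simp [Set.indicator, hs] <;> ring
      _ = (1 - p x₀) * (iid p n).toOuterMeasure {S | x₀ ∉ S} := by
          rw [ENNReal.tsum_mul_left, PMF.toOuterMeasure_apply]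
      _ = (1 - p x₀) ^ (n + 1) := by rw [ih, pow_succ]; ring

lemma tv_self (p : PMF X) : tv p p = 0 := by simp [tv]

lemma tv_pure (p : PMF X) (x₀ : X) : tv (PMF.pure x₀) p = 1 - (p x₀).toReal := by
  classical
  have hsum : Summable fun x => (p x).toReal :=
    ENNReal.summable_toReal (by rw [p.tsum_coe]; exact ENNReal.one_ne_top)
  have hsum1 : (∑' x, (p x).toReal) = 1 := by
    rw [← ENNReal.tsum_toReal_eq fun x => PMF.apply_ne_top p x, p.tsum_coe, ENNReal.toReal_one]
  have hle1 : ∀ x, (p x).toReal ≤ 1 := fun x => by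
    calc (p x).toReal ≤ (1 : ℝ≥0∞).toReal := ENNReal.toReal_mono ENNReal.one_ne_top (PMF.coe_le_one p x)
      _ = 1 := ENNReal.toReal_one
  have hnn : ∀ x, 0 ≤ (p x).toReal := fun x => ENNReal.toReal_nonneg
  set f : X → ℝ := fun x => |((PMF.pure x₀) x).toReal - (p x).toReal| with hf
  have hfval : ∀ x, f x = Function.update (fun x => (p x).toReal) x₀ (1 - (p x₀).toReal) x := by
    intro x
    rw [Function.update_apply]
    by_cases hx : x = x₀
    · subst hx; simp [hf, PMF.pure_apply, abs_of_nonneg, sub_nonneg.2 (hle1 x)]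
    · simp [hf, PMF.pure_apply, hx, abs_of_nonpos, hnn x]
  have hsf : Summable f := (hsum.update x₀ _).congr fun x => (hfval x).symm
  have h1 : ∑' x, f x = f x₀ + ∑' x, if x = x₀ then 0 else f x := Summable.tsum_eq_add_tsum_ite hsf x₀
  have h2 : (∑' x, (p x).toReal) = (p x₀).toReal + ∑' x, if x = x₀ then 0 else (p x).toReal :=
    Summable.tsum_eq_add_tsum_ite hsum x₀
  have h3 : (∑' x, if x = x₀ then 0 else f x) = ∑' x, if x = x₀ then 0 else (p x).toReal := by
    refine tsum_congr fun x => ?_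
    by_cases hx : x = x₀
    · simp [hx]
    · simp [hx, hfval x, Function.update_apply]
  have hfx₀ : f x₀ = 1 - (p x₀).toReal := by
    rw [hfval x₀, Function.update_self]
  have : ∑' x, f x = (1 - (p x₀).toReal) + (1 - (p x₀).toReal) := by
    rw [h1, h3, hfx₀]
    have := h2
    rw [hsum1] at this
    linarith
  rw [tv, this]; ring

end Aux

open Classical in
/-- The learner for `stmt0`. -/
noncomputable def stmt0Learner (B : ℕ → Finset ℕ) (g : ℕ → ℕ) (S : Multiset (ℕ × ℕ)) :
    PMF (ℕ × ℕ) :=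
  if h : ∃ q, q ∈ Cg B g ∧ ∃ i' j' : ℕ, IsPijk B i' j' (g j') q ∧ ((i', 2*j'+2) : ℕ × ℕ) ∈ S
  then h.choose else PMF.pure ((0 : ℕ), (0 : ℕ))

theorem stmt0' (B : ℕ → Finset ℕ) (hB : Function.Surjective B)
    (g : ℕ → ℕ) (hg : Monotone g) :
    ∃ A : Multiset (ℕ × ℕ) → PMF (ℕ × ℕ),
      ∀ p ∈ Cg B g, ∀ ε δ : ℝ, 0 < ε → ε < 1 → 0 < δ → δ < 1 →
        ∀ m : ℕ, Real.log (1 / δ) * (g ⌈1 / ε⌉₊ : ℝ) ≤ m →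
          1 - ENNReal.ofReal δ ≤ probEvent (iid p m) {S | tv (A S) p ≤ ε} := by
  classical
  refine ⟨stmt0Learner B g, ?_⟩
  rintro p ⟨i, j, hj1, hjg, hBne, hpijk⟩ ε δ hε hε1 hδ hδ1 m hm
  have hp : p ∈ Cg B g := ⟨i, j, hj1, hjg, hBne, hpijk⟩
  -- uniqueness of the candidate consistent with a clean sample
  have huniq : ∀ S : Multiset (ℕ × ℕ), (∀ x ∈ S, x ∈ p.support) →
      ∀ (q : PMF (ℕ × ℕ)) (i' j' : ℕ), IsPijk B i' j' (g j') q →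
        ((i', 2*j'+2) : ℕ × ℕ) ∈ S → q = p := by
    intro S hS q i' j' hq hmem
    have hps : p (i', 2*j'+2) ≠ 0 := (PMF.mem_support_iff p _).1 (hS _ hmem)
    rw [hpijk] at hps
    have c3 : i' = i ∧ j' = j := by
      by_contra hne
      apply hps
      have c1 : ¬(i' = 0 ∧ 2*j'+2 = 0) := by omega
      have c2 : ¬(2*j'+2 = 2*j+1) := by omega
      have c4 : ¬(i' = i ∧ 2*j'+2 = 2*j+2) := by omega
      simp [Prod.mk.injEq, c1, c2, c4]
      omega
    obtain ⟨rfl, rfl⟩ := c3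
    exact PMF.ext fun x => (hq x).trans (hpijk x).symm
  have hAp : ∀ S : Multiset (ℕ × ℕ), (∀ x ∈ S, x ∈ p.support) →
      ((i, 2*j+2) : ℕ × ℕ) ∈ S → stmt0Learner B g S = p := by
    intro S hS hmem
    have hex : ∃ q, q ∈ Cg B g ∧ ∃ i' j' : ℕ, IsPijk B i' j' (g j') q ∧
        ((i', 2*j'+2) : ℕ × ℕ) ∈ S := ⟨p, hp, i, j, hpijk, hmem⟩
    rw [stmt0Learner, dif_pos hex]
    obtain ⟨hq1, i', j', hq2, hq3⟩ := hex.choose_spec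
    exact huniq S hS _ i' j' hq2 hq3
  have hAor : ∀ S : Multiset (ℕ × ℕ), (∀ x ∈ S, x ∈ p.support) →
      stmt0Learner B g S = p ∨ stmt0Learner B g S = PMF.pure ((0 : ℕ), (0 : ℕ)) := by
    intro S hS
    rw [stmt0Learner]
    by_cases hex : ∃ q, q ∈ Cg B g ∧ ∃ i' j' : ℕ, IsPijk B i' j' (g j') q ∧
        ((i', 2*j'+2) : ℕ × ℕ) ∈ S
    · left
      rw [dif_pos hex]
      obtain ⟨hq1, i', j', hq2, hq3⟩ := hex.choose_spec
      exact huniq S hS _ i' j' hq2 hq3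
    · right
      rw [dif_neg hex]
  -- values of p
  have hp00 : p ((0 : ℕ), (0 : ℕ)) = 1 - ((j : ℝ≥0∞))⁻¹ := by
    rw [hpijk]
    have c1 : ¬((0:ℕ) = 2*j+1) := by omega
    have c2 : ((0 : ℕ × ℕ)) ≠ ((i:ℕ), 2*j+2) := by
      intro h
      have h2 := congrArg Prod.snd h
      simp at h2
    simp [Prod.mk.injEq, c1, c2]
  have hpx : p ((i : ℕ), 2*j+2) = ((g j : ℝ≥0∞))⁻¹ := by
    rw [hpijk]
    have c1 : ((i:ℕ), 2*j+2) ≠ ((0:ℕ), (0:ℕ)) := by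
      intro h; rw [Prod.mk.injEq] at h; omega
    have c2 : ¬(2*j+2 = 2*j+1) := by omega
    simp [Prod.mk.injEq, c1, c2]
  have hj0 : (0:ℝ) < j := by exact_mod_cast hj1
  have htvpure : tv (PMF.pure ((0 : ℕ), (0 : ℕ))) p = (j : ℝ)⁻¹ := by
    have hle : ((j : ℝ≥0∞))⁻¹ ≤ 1 := ENNReal.inv_le_one.2 (by exact_mod_cast hj1)
    rw [tv_pure, hp00, ENNReal.toReal_sub_of_le hle ENNReal.one_ne_top, ENNReal.toReal_one,
      ENNReal.toReal_inv, ENNReal.toReal_natCast]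
    ring
  -- the "clean sample" event
  set F : Set (Multiset (ℕ × ℕ)) := {S | ∀ x ∈ S, x ∈ p.support} with hF
  have hPF : (iid p m).toOuterMeasure F = 1 :=
    (PMF.toOuterMeasure_apply_eq_one_iff _ _).2 (fun S hS => iid_support p m S hS)
  rw [probEvent]
  by_cases hcase : (j : ℝ)⁻¹ ≤ ε
  · -- large j: output is always ε-close
    have hsub : F ⊆ {S | tv (stmt0Learner B g S) p ≤ ε} := by
      intro S hS
      rcases hAor S hS with h | h
      · rw [Set.mem_setOf_eq, h, tv_self]; exact hε.le
      · rw [Set.mem_setOf_eq, h, htvpure]; exact hcase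
    calc 1 - ENNReal.ofReal δ ≤ 1 := tsub_le_self
      _ = (iid p m).toOuterMeasure F := hPF.symm
      _ ≤ _ := MeasureTheory.measure_mono hsub
  · -- small j: the special point arrives with high probability
    have hjε : (j : ℝ) < 1 / ε := by
      rw [lt_div_iff₀ hε]
      have h1 : ε < (j:ℝ)⁻¹ := not_le.1 hcase
      calc (j:ℝ) * ε < (j:ℝ) * (j:ℝ)⁻¹ := by
            exact mul_lt_mul_of_pos_left h1 hj0
        _ = 1 := mul_inv_cancel₀ (ne_of_gt hj0)
    have hjle : j ≤ ⌈1 / ε⌉₊ := (Nat.lt_ceil.2 hjε).le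
    set k := g j with hk
    have hk2 : 2 ≤ k := by omega
    have hk0 : (0:ℝ) < k := by
      have : 0 < k := by omega
      exact_mod_cast this
    have hkle : (k : ℝ) ≤ (g ⌈1 / ε⌉₊ : ℝ) := Nat.cast_le.2 (hg hjle)
    have hlog : 0 < Real.log (1 / δ) := Real.log_pos (by rw [lt_div_iff₀ hδ]; linarith)
    have hmk : Real.log (1 / δ) * k ≤ m :=
      le_trans (mul_le_mul_of_nonneg_left hkle hlog.le) hm
    have hkinv : (k:ℝ)⁻¹ ≤ 1 := by
      rw [inv_le_one_iff₀]
      right; exact_mod_cast by omega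
    have h0 : (0:ℝ) ≤ 1 - (k:ℝ)⁻¹ := by linarith
    have hreal : (1 - (k:ℝ)⁻¹) ^ m ≤ δ := by
      have h1 : (1:ℝ) - (k:ℝ)⁻¹ ≤ Real.exp (-(k:ℝ)⁻¹) := by
        have := Real.add_one_le_exp (-(k:ℝ)⁻¹); linarith
      have h2 : Real.log (1 / δ) ≤ (m:ℝ) / (k:ℝ) := (le_div_iff₀ hk0).2 hmk
      have h3 : Real.log δ = -Real.log (1 / δ) := by
        rw [one_div, Real.log_inv]; ring
      calc (1 - (k:ℝ)⁻¹) ^ m ≤ (Real.exp (-(k:ℝ)⁻¹)) ^ m := pow_le_pow_left₀ h0 h1 m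
        _ = Real.exp ((m:ℝ) * -(k:ℝ)⁻¹) := (Real.exp_nat_mul _ m).symm
        _ ≤ Real.exp (Real.log δ) := by
            apply Real.exp_le_exp.2
            have h4 : (m:ℝ) * -(k:ℝ)⁻¹ = -((m:ℝ)/(k:ℝ)) := by ring
            rw [h4, h3]
            exact neg_le_neg h2
        _ = δ := Real.exp_log hδ
    have henn : (1 - p ((i : ℕ), 2*j+2)) ^ m ≤ ENNReal.ofReal δ := by
      rw [hpx]
      have heq : (1:ℝ≥0∞) - ((k:ℝ≥0∞))⁻¹ = ENNReal.ofReal (1 - (k:ℝ)⁻¹) := by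
        rw [ENNReal.ofReal_sub _ (by positivity), ENNReal.ofReal_one,
          ENNReal.ofReal_inv_of_pos hk0, ENNReal.ofReal_natCast]
      rw [heq, ← ENNReal.ofReal_pow h0]
      exact ENNReal.ofReal_le_ofReal hreal
    set G : Set (Multiset (ℕ × ℕ)) := {S | ((i : ℕ), 2*j+2) ∈ S} with hG
    have hsub : F ∩ G ⊆ {S | tv (stmt0Learner B g S) p ≤ ε} := by
      rintro S ⟨hSF, hSG⟩
      rw [Set.mem_setOf_eq, hAp S hSF hSG, tv_self]
      exact hε.le
    have hcompl : (iid p m).toOuterMeasure (F ∩ G)ᶜ ≤ ENNReal.ofReal δ := by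
      rw [Set.compl_inter]
      refine le_trans (MeasureTheory.measure_union_le _ _) ?_
      have hFc : (iid p m).toOuterMeasure Fᶜ = 0 := by
        rw [pmf_compl, hPF, tsub_self]
      have hGc : (iid p m).toOuterMeasure Gᶜ ≤ ENNReal.ofReal δ := by
        have hGeq : Gᶜ = {S : Multiset (ℕ × ℕ) | ((i : ℕ), 2*j+2) ∉ S} := by
          ext S; simp [hG]
        rw [hGeq, iid_miss]
        exact henn
      rw [hFc, zero_add]
      exact hGc
    calc 1 - ENNReal.ofReal δ
        ≤ 1 - (iid p m).toOuterMeasure (F ∩ G)ᶜ := tsub_le_tsub_left hcompl 1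
      _ ≤ (iid p m).toOuterMeasure (F ∩ G) := pmf_one_sub_compl_le _ _
      _ ≤ _ := MeasureTheory.measure_mono hsub

/-- For every monotone `g : ℕ → ℕ`, the class `C_g` is realizably PAC
learnable with sample complexity `m(ε,δ) ≤ log(1/δ)·g(1/ε)`. -/
theorem stmt0 (B : ℕ → Finset ℕ) (hB : Function.Surjective B)
    (g : ℕ → ℕ) (hg : Monotone g) :
    ∃ A : Multiset (ℕ × ℕ) → PMF (ℕ × ℕ),
      ∀ p ∈ Cg B g, ∀ ε δ : ℝ, 0 < ε → ε < 1 → 0 < δ → δ < 1 →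
        ∀ m : ℕ, Real.log (1 / δ) * (g ⌈1 / ε⌉₊ : ℝ) ≤ m →
          1 - ENNReal.ofReal δ ≤ probEvent (iid p m) {S | tv (A S) p ≤ ε} := by
  exact stmt0' B hB g hg
end

section
/- Let C be a class of distributions on a countable domain X, let α ≥ 1, and let 𝒱 be a class of adaptive adversaries containing adversaries V1 and V2 with fixed constant budgets budget(V1) = η1 and budget(V2) = η2. Let γ', ζ ∈ (0,1) and set γ = 2α·max{η1, η2} + 2γ'. If for every m ∈ ℕ the pair of adversaries (V1,V2) successfully (γ,ζ)-confuses C-generated samples of size m, then C is not α-robustly learnable with respect to 𝒱. Moreover, if V1 = V2, then V1 is a universal α-adversary for C. -/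
open scoped ENNReal NNReal

/-!
A learner that is α-robust against `V1` and `V2` must, on a sample of the confusing size,
output with high probability a distribution within `α·η₂ + γ'` of the target `p` when the
sample is `V2(p^m)`, and within `α·η₁ + γ'` of `q` when it is `V1(q^m)`. Because every `q` in
the support of `Q` is more than `2α·max{η₁,η₂} + 2γ'` away from `p`, no output is close to
both, so the event "the output is close to `p`" is likely under `V2(p^m)` and unlikely under
`V1(|Q|^m)`. Its probabilities under the two laws therefore differ by at least `1 − 2δ`,
contradicting `d_TV(V1(|Q|^m), V2(p^m)) < ζ` for `δ = (1 − ζ)/2`.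
-/

section TotalVariation

variable {X : Type*}

lemma PMF.summable_toReal (p : PMF X) : Summable fun x => (p x).toReal :=
  ENNReal.summable_toReal (p.tsum_coe ▸ ENNReal.one_ne_top)

lemma PMF.tsum_toReal (p : PMF X) : ∑' x, (p x).toReal = 1 := by
  rw [← ENNReal.tsum_toReal_eq p.apply_ne_top, p.tsum_coe, ENNReal.toReal_one]

lemma tv_comm (p q : PMF X) : tv p q = tv q p := by
  simp only [tv, abs_sub_comm]

lemma tv_triangle (p r q : PMF X) : tv p q ≤ tv p r + tv r q := by
  have hpr := (p.summable_toReal.sub r.summable_toReal).abs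
  have hrq := (r.summable_toReal.sub q.summable_toReal).abs
  rw [tv, tv, tv, ← add_div, ← hpr.tsum_add hrq]
  refine div_le_div_of_nonneg_right ?_ zero_le_two
  exact Summable.tsum_le_tsum (fun x => abs_sub_le _ _ _)
    (p.summable_toReal.sub q.summable_toReal).abs (hpr.add hrq)

lemma disjoint_setOf_tv_le {ι : Type*} (A : ι → PMF X) {p q : PMF X} {r s : ℝ}
    (h : r + s < tv p q) : Disjoint {i | tv (A i) p ≤ r} {i | tv (A i) q ≤ s} := by
  refine Set.disjoint_left.mpr fun i (hp : tv (A i) p ≤ r) (hq : tv (A i) q ≤ s) => ?_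
  have := tv_triangle p (A i) q
  rw [tv_comm p (A i)] at this
  linarith

end TotalVariation

section ProbEvent

variable {β : Type*} (P : PMF β)

lemma probEvent_ne_top (E : Set β) : probEvent P E ≠ ∞ := by
  rw [probEvent, PMF.toOuterMeasure_apply]
  exact P.tsum_coe_indicator_ne_top E

lemma probEvent_add_probEvent_le_one {E G : Set β} (h : Disjoint E G) :
    probEvent P E + probEvent P G ≤ 1 := by
  rw [probEvent, probEvent, PMF.toOuterMeasure_apply, PMF.toOuterMeasure_apply,
    ← ENNReal.tsum_add, ← P.tsum_coe]
  refine ENNReal.tsum_le_tsum fun x => ?_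
  rw [← congr_fun (Set.indicator_union_of_disjoint h P) x]
  exact Set.indicator_le_self _ _ x

lemma probEvent_le_of_disjoint {E G : Set β} (h : Disjoint E G) {c : ℝ≥0∞}
    (hG : 1 - c ≤ probEvent P G) : probEvent P E ≤ c :=
  calc probEvent P E ≤ 1 - probEvent P G :=
        ENNReal.le_sub_of_add_le_right (probEvent_ne_top P G)
          (probEvent_add_probEvent_le_one P h)
    _ ≤ 1 - (1 - c) := tsub_le_tsub_left hG 1
    _ ≤ c := tsub_tsub_le

lemma probEvent_bind_le {γ : Type*} {f : β → PMF γ} {E : Set γ} {c : ℝ≥0∞}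
    (h : ∀ b ∈ P.support, probEvent (f b) E ≤ c) : probEvent (P.bind f) E ≤ c :=
  calc probEvent (P.bind f) E = ∑' b, P b * probEvent (f b) E :=
        PMF.toOuterMeasure_bind_apply P f E
    _ ≤ ∑' b, P b * c := ENNReal.tsum_le_tsum fun b => by
        by_cases hb : b ∈ P.support
        · exact mul_le_mul_right (h b hb) _
        · simp [(P.apply_eq_zero_iff b).mpr hb]
    _ = c := by rw [ENNReal.tsum_mul_right, P.tsum_coe, one_mul]

lemma probEvent_toReal (E : Set β) :
    (probEvent P E).toReal = ∑' x, E.indicator (fun x => (P x).toReal) x := by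
  rw [probEvent, PMF.toOuterMeasure_apply, ENNReal.tsum_toReal_eq fun x =>
    ne_top_of_le_ne_top (P.apply_ne_top x) (Set.indicator_le_self _ _ x)]
  exact tsum_congr fun x => by by_cases hx : x ∈ E <;> simp [hx]

lemma probEvent_toReal_sub_le_tv (P' : PMF β) (E : Set β) :
    (probEvent P E).toReal - (probEvent P' E).toReal ≤ tv P P' := by
  set d : β → ℝ := fun x => (P x).toReal - (P' x).toReal
  have hd : Summable d := P.summable_toReal.sub P'.summable_toReal
  have hd0 : ∑' x, d x = 0 := by
    rw [P.summable_toReal.tsum_sub P'.summable_toReal, P.tsum_toReal, P'.tsum_toReal, sub_self]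
  -- the mass of `P - P'` on `E` is at most its positive mass, which is half of `∑ |d|`
  have hpos : ∑' x, E.indicator d x ≤ ∑' x, (|d x| + d x) / 2 := by
    refine Summable.tsum_le_tsum (fun x => ?_) (hd.indicator E) ((hd.abs.add hd).div_const 2)
    by_cases hx : x ∈ E
    · simp only [Set.indicator_of_mem hx]; linarith [le_abs_self (d x)]
    · simp only [Set.indicator_of_notMem hx]; linarith [neg_abs_le (d x)]
  rw [probEvent_toReal, probEvent_toReal, ← (P.summable_toReal.indicator E).tsum_sub
    (P'.summable_toReal.indicator E)]
  calc ∑' x, (E.indicator (fun x => (P x).toReal) x - E.indicator (fun x => (P' x).toReal) x)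
      = ∑' x, E.indicator d x := tsum_congr fun x => (congr_fun (Set.indicator_sub E _ _) x).symm
    _ ≤ ∑' x, (|d x| + d x) / 2 := hpos
    _ = tv P P' := by rw [tsum_div_const, hd.abs.tsum_add hd, hd0, add_zero, tv]

end ProbEvent

theorem not_confusesPair_of_robustLearnerFor {X : Type*} {C : Set (PMF X)}
    {A : Multiset X → PMF X} {mc : ℝ → ℝ → ℕ} {V1 V2 : Adversary X} {b1 b2 γ ζ ε δ : ℝ}
    (h1 : RobustLearnerFor C A mc V1 b1) (h2 : RobustLearnerFor C A mc V2 b2)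
    (hε : ε ∈ Set.Ioo (0 : ℝ) 1) (hδ : δ ∈ Set.Ioo (0 : ℝ) 1)
    (hγ : b1 + b2 + 2 * ε ≤ γ) (hζ : ζ + 2 * δ ≤ 1) :
    ¬ ConfusesPair C V1 V2 γ ζ (mc ε δ) := by
  rintro ⟨p, hp, Q, hQC, hfar, hclose⟩
  set E : Set (Multiset X) := {T | tv (A T) p ≤ b2 + ε}
  have hsucceed : 1 - ENNReal.ofReal δ ≤ probEvent (advPush V2 (iid p (mc ε δ))) E :=
    h2 p hp ε δ hε.1 hε.2 hδ.1 hδ.2 _ le_rfl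
  have hfail : probEvent (advPush V1 (metaSample Q (mc ε δ))) E ≤ ENNReal.ofReal δ := by
    rw [advPush, metaSample, PMF.bind_bind]
    refine probEvent_bind_le Q fun q hq => probEvent_le_of_disjoint _ ?_
      (h1 q (hQC hq) ε δ hε.1 hε.2 hδ.1 hδ.2 _ le_rfl)
    exact disjoint_setOf_tv_le A (by linarith [hfar q hq])
  have hsucceed' : 1 - δ ≤ (probEvent (advPush V2 (iid p (mc ε δ))) E).toReal := by
    have := ENNReal.toReal_mono (probEvent_ne_top _ _) hsucceed
    rwa [ENNReal.toReal_sub_of_le (ENNReal.ofReal_le_one.mpr hδ.2.le) ENNReal.one_ne_top,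
      ENNReal.toReal_one, ENNReal.toReal_ofReal hδ.1.le] at this
  have hfail' := ENNReal.toReal_le_of_le_ofReal hδ.1.le hfail
  have hgap := probEvent_toReal_sub_le_tv (advPush V2 (iid p (mc ε δ)))
    (advPush V1 (metaSample Q (mc ε δ))) E
  rw [tv_comm] at hgap
  linarith

theorem stmt3_general {X : Type*} (C : Set (PMF X)) (α : ℝ) (hα : 1 ≤ α)
    (𝒱 : Set (Adversary X × ℝ)) (V1 V2 : Adversary X) (η1 η2 : ℝ)
    (hV1 : (V1, η1) ∈ 𝒱) (hV2 : (V2, η2) ∈ 𝒱)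
    (γ' ζ : ℝ) (hγ' : γ' ∈ Set.Ioo (0 : ℝ) 1) (hζ : ζ ∈ Set.Ioo (0 : ℝ) 1)
    (hconf : ∀ m : ℕ, ConfusesPair C V1 V2 (2 * α * max η1 η2 + 2 * γ') ζ m) :
    ¬ RobustlyLearnableWrtClass C α 𝒱 ∧
      (V1 = V2 → UniversalAdversary C α V1 η1) := by
  have hα0 : 0 ≤ α := by linarith
  have hle1 : α * η1 ≤ α * max η1 η2 := mul_le_mul_of_nonneg_left (le_max_left ..) hα0
  have hle2 : α * η2 ≤ α * max η1 η2 := mul_le_mul_of_nonneg_left (le_max_right ..) hα0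
  have hδ : (1 - ζ) / 2 ∈ Set.Ioo (0 : ℝ) 1 := ⟨by linarith [hζ.2], by linarith [hζ.1]⟩
  have key : ∀ {A mc b1 b2}, b1 ≤ α * max η1 η2 → b2 ≤ α * max η1 η2 →
      RobustLearnerFor C A mc V1 b1 → RobustLearnerFor C A mc V2 b2 → False :=
    fun hb1 hb2 h1 h2 => not_confusesPair_of_robustLearnerFor h1 h2 hγ' hδ
      (by linarith) (by linarith) (hconf _)
  refine ⟨fun ⟨A, mc, hA⟩ => key hle1 hle2 (hA _ hV1) (hA _ hV2), ?_⟩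
  rintro rfl ⟨A, mc, hA⟩
  exact key hle1 hle1 hA hA

/-- If for every `m` the pair `(V1,V2)` (members of `𝒱`, with fixed constant
budgets `η1, η2`) successfully `(2α·max{η1,η2} + 2γ', ζ)`-confuses `C`-generated samples of
size `m`, then `C` is not α-robustly learnable w.r.t. `𝒱`; and if `V1 = V2` then `V1` is a
universal α-adversary for `C`. -/
theorem stmt3 {X : Type*} [Countable X] (C : Set (PMF X)) (α : ℝ) (hα : 1 ≤ α)
    (𝒱 : Set (Adversary X × ℝ)) (V1 V2 : Adversary X) (η1 η2 : ℝ)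
    (hV1 : (V1, η1) ∈ 𝒱) (hV2 : (V2, η2) ∈ 𝒱)
    (hη1 : η1 ∈ Set.Ioo (0 : ℝ) 1) (hη2 : η2 ∈ Set.Ioo (0 : ℝ) 1)
    (hb1 : FixedBudget V1 η1) (hb2 : FixedBudget V2 η2)
    (γ' ζ : ℝ) (hγ' : γ' ∈ Set.Ioo (0 : ℝ) 1) (hζ : ζ ∈ Set.Ioo (0 : ℝ) 1)
    (hconf : ∀ m : ℕ, ConfusesPair C V1 V2 (2 * α * max η1 η2 + 2 * γ') ζ m) :
    ¬ RobustlyLearnableWrtClass C α 𝒱 ∧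
      (V1 = V2 → UniversalAdversary C α V1 η1) :=
  stmt3_general C α hα 𝒱 V1 V2 η1 η2 hV1 hV2 γ' ζ hγ' hζ hconf
end

section
/- Let C be a class of distributions on a countable domain X and let V_sub be a subtractive adaptive adversary. Let ζ ∈ (0,1), m ∈ ℕ, p ∈ C, and let Q be a meta-distribution over C such that d_TV(V_sub(|Q|^m), V_sub(p^m)) < ζ. Then there exist additive adaptive adversaries V_{add,p^m} and V_{add,|Q|^m} such that d_TV(V_{add,p^m}(|Q|^m), V_{add,|Q|^m}(p^m)) < ζ. Furthermore, if V_sub has fixed constant budget η < 1/2, then both V_{add,p^m} and V_{add,|Q|^m} have fixed constant budgets of no more than η. -/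
/-!
A subtractive adversary splits a sample `S` into a kept part `T` and a removed part `S - T`.
`V_{add,p^m}` runs `V_sub`, keeps all of `S`, and adds a fresh copy of the removed part drawn
from its conditional law under `p^m` given `T`; `V_{add,|Q|^m}` does the same with the
conditional law under `|Q|^m`. Applied to `|Q|^m`, resp. `p^m`, both output `T + R_Q + R_p`,
where `T ∼ V_sub(|Q|^m)`, resp. `T ∼ V_sub(p^m)`, and `R_Q`, `R_p` are drawn independently from
the two conditional laws given `T`. Thus both outputs are images of the two `V_sub`-outputs under
one common Markov kernel, and total variation does not increase under a Markov kernel.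
As many points are added as `V_sub` removes, so the budget carries over.
-/

open scoped ENNReal NNReal

lemma PMF.bind_congr_of_mem_support {α β : Type*} (P : PMF α) {f g : α → PMF β}
    (h : ∀ a ∈ P.support, f a = g a) : P.bind f = P.bind g :=
  PMF.ext fun x => tsum_congr fun a => by
    by_cases ha : P a = 0
    · simp [ha]
    · rw [h a ha]

section TotalVariation

variable {α β : Type*}

lemma ENNReal.abs_toReal_sub_toReal {a b : ℝ≥0∞} (ha : a ≠ ∞) (hb : b ≠ ∞) :
    |a.toReal - b.toReal| = (a - b + (b - a)).toReal := by
  rcases le_total a b with h | h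
  · rw [tsub_eq_zero_of_le h, zero_add, ENNReal.toReal_sub_of_le h hb, abs_sub_comm,
      abs_of_nonneg (sub_nonneg.2 (ENNReal.toReal_mono hb h))]
  · rw [tsub_eq_zero_of_le h, add_zero, ENNReal.toReal_sub_of_le h ha,
      abs_of_nonneg (sub_nonneg.2 (ENNReal.toReal_mono ha h))]

/-- Twice the total variation distance, in `ℝ≥0∞`, where sums need no summability side
conditions. -/
noncomputable def etv (p q : PMF α) : ℝ≥0∞ :=
  ∑' x, (p x - q x + (q x - p x))

lemma etv_le_two (p q : PMF α) : etv p q ≤ 2 :=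
  calc etv p q ≤ ∑' x, (p x + q x) :=
        ENNReal.tsum_le_tsum fun x => add_le_add tsub_le_self tsub_le_self
    _ = 2 := by rw [ENNReal.tsum_add, p.tsum_coe, q.tsum_coe, one_add_one_eq_two]

lemma tv_eq_toReal_etv (p q : PMF α) : tv p q = (etv p q).toReal / 2 := by
  have hsummand_ne_top : ∀ x, p x - q x + (q x - p x) ≠ ∞ := fun x =>
    ENNReal.add_ne_top.2 ⟨(tsub_le_self.trans_lt (p.apply_lt_top x)).ne,
      (tsub_le_self.trans_lt (q.apply_lt_top x)).ne⟩
  rw [tv, etv, ENNReal.tsum_toReal_eq hsummand_ne_top]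
  congr 1
  exact tsum_congr fun x => ENNReal.abs_toReal_sub_toReal (p.apply_ne_top x) (q.apply_ne_top x)

lemma etv_bind_le (P P' : PMF α) (L : α → PMF β) :
    etv (P.bind L) (P'.bind L) ≤ etv P P' := by
  have hsub : ∀ (A B : PMF α) (u : β),
      (A.bind L) u - (B.bind L) u ≤ ∑' a, (A a - B a) * L a u := by
    intro A B u
    rw [PMF.bind_apply, PMF.bind_apply, tsub_le_iff_right, ← ENNReal.tsum_add]
    exact ENNReal.tsum_le_tsum fun a => by rw [← add_mul]; exact mul_le_mul_left le_tsub_add _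
  calc etv (P.bind L) (P'.bind L)
      ≤ ∑' u, (∑' a, (P a - P' a) * L a u + ∑' a, (P' a - P a) * L a u) :=
        ENNReal.tsum_le_tsum fun u => add_le_add (hsub P P' u) (hsub P' P u)
    _ = ∑' a, (P a - P' a) * ∑' u, L a u + ∑' a, (P' a - P a) * ∑' u, L a u := by
        simp only [ENNReal.tsum_add, ← ENNReal.tsum_mul_left]
        rw [ENNReal.tsum_comm, ENNReal.tsum_comm (f := fun u a => (P' a - P a) * L a u)]
    _ = etv P P' := by simp only [PMF.tsum_coe, mul_one, etv, ENNReal.tsum_add]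

lemma tv_bind_le (P P' : PMF α) (L : α → PMF β) :
    tv (P.bind L) (P'.bind L) ≤ tv P P' := by
  rw [tv_eq_toReal_etv, tv_eq_toReal_etv]
  gcongr
  · exact (etv_le_two P P').trans_lt (by norm_num) |>.ne
  · exact etv_bind_le P P' L

end TotalVariation

section Conditional

variable {α β : Type*}

lemma PMF.map_fst_apply (J : PMF (α × β)) (a : α) : J.map Prod.fst a = ∑' b, J (a, b) := by
  classical
  rw [PMF.map_apply, ENNReal.tsum_prod', ENNReal.tsum_comm]
  refine tsum_congr fun b => ?_
  simp_rw [eq_comm (a := a)]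
  exact tsum_ite_eq a (fun a' => J (a', b))

/-- The fallback `fb a` is used where the first coordinate `a` has probability zero. -/
noncomputable def condSnd (J : PMF (α × β)) (fb : α → PMF β) (a : α) : PMF β :=
  if h : ∑' b, J (a, b) = 0 then fb a
  else PMF.normalize (fun b => J (a, b)) h (J.map_fst_apply a ▸ PMF.apply_ne_top _ a)

lemma map_fst_mul_condSnd (J : PMF (α × β)) (fb : α → PMF β) (a : α) (b : β) :
    J.map Prod.fst a * condSnd J fb a b = J (a, b) := by
  rw [J.map_fst_apply, condSnd]
  split_ifs with h
  · rw [h, zero_mul, eq_comm, ← nonpos_iff_eq_zero, ← h]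
    exact ENNReal.le_tsum (f := fun b => J (a, b)) b
  · rw [PMF.normalize_apply, mul_comm, mul_assoc, ENNReal.inv_mul_cancel h
      (J.map_fst_apply a ▸ PMF.apply_ne_top _ a), mul_one]

lemma mem_support_condSnd {J : PMF (α × β)} {fb : α → PMF β} {a : α} {b : β}
    (hb : b ∈ (condSnd J fb a).support) : (a, b) ∈ J.support ∨ b ∈ (fb a).support := by
  rw [condSnd] at hb
  split_ifs at hb
  · exact Or.inr hb
  · exact Or.inl ((PMF.mem_support_normalize_iff _ _ b).1 hb)

lemma bind_condSnd {γ : Type*} (J : PMF (α × β)) (fb : α → PMF β)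
    (F : α → β → PMF γ) :
    (J.map Prod.fst).bind (fun a => (condSnd J fb a).bind (F a)) =
      J.bind fun ab => F ab.1 ab.2 := by
  ext u
  rw [PMF.bind_apply, PMF.bind_apply, ENNReal.tsum_prod']
  refine tsum_congr fun a => ?_
  rw [PMF.bind_apply, ← ENNReal.tsum_mul_left]
  exact tsum_congr fun b => by rw [← mul_assoc, map_fst_mul_condSnd]

end Conditional

lemma card_of_mem_support_iid {X : Type*} (p : PMF X) :
    ∀ n, ∀ S ∈ (iid p n).support, Multiset.card S = n
  | 0, S, hS => by rw [(PMF.mem_support_pure_iff _ _).1 hS, Multiset.card_zero]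
  | n + 1, S, hS => by
    obtain ⟨s, hs, hS⟩ := (PMF.mem_support_bind_iff _ _ _).1 hS
    obtain ⟨x, -, rfl⟩ := (PMF.mem_support_map_iff _ _ _).1 hS
    rw [Multiset.card_cons, card_of_mem_support_iid p n s hs]

lemma card_of_mem_support_metaSample {X : Type*} (Q : PMF (PMF X)) (m : ℕ) :
    ∀ S ∈ (metaSample Q m).support, Multiset.card S = m := by
  intro S hS
  obtain ⟨q, -, hS⟩ := (PMF.mem_support_bind_iff _ _ _).1 hS
  exact card_of_mem_support_iid q m S hS

section Refill

variable {X : Type*} [DecidableEq X] {Vs : Adversary X}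

noncomputable def keptRemoved (Vs : Adversary X) (P : PMF (Multiset X)) :
    PMF (Multiset X × Multiset X) :=
  P.bind fun S => (Vs S).map fun T => (T, S - T)

lemma map_fst_keptRemoved (Vs : Adversary X) (P : PMF (Multiset X)) :
    (keptRemoved Vs P).map Prod.fst = advPush Vs P := by
  simp only [keptRemoved, advPush, PMF.map_bind, PMF.map_comp]
  exact congrArg P.bind (funext fun S => PMF.map_id (Vs S))

noncomputable def condRemoved (Vs : Adversary X) (P : PMF (Multiset X))
    (fb : Multiset X → PMF (Multiset X)) : Multiset X → PMF (Multiset X) :=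
  condSnd (keptRemoved Vs P) fb

lemma card_of_mem_support_condRemoved (hVs : IsSubtractive Vs) {P : PMF (Multiset X)} {m : ℕ}
    (hP : ∀ S ∈ P.support, Multiset.card S = m) {fb : Multiset X → PMF (Multiset X)}
    (hfb : ∀ T, ∀ R ∈ (fb T).support, Multiset.card R = m - Multiset.card T)
    (T R : Multiset X) (hR : R ∈ (condRemoved Vs P fb T).support) :
    Multiset.card R = m - Multiset.card T := by
  rcases mem_support_condSnd hR with hTR | hR
  · obtain ⟨S, hS, hTR⟩ := (PMF.mem_support_bind_iff _ _ _).1 hTR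
    obtain ⟨T', hT', hTR⟩ := (PMF.mem_support_map_iff _ _ _).1 hTR
    obtain ⟨rfl, rfl⟩ := Prod.mk.inj hTR
    rw [Multiset.card_sub (hVs S T' hT'), hP S hS]
  · exact hfb T R hR

/-- Samples of size other than `m` never occur under `|Q|^m` or `p^m`; adding back their removed
part only serves to keep the budget exact. -/
noncomputable def refill (Vs : Adversary X) (m : ℕ) (K : Multiset X → PMF (Multiset X)) :
    Adversary X := fun S =>
  (Vs S).bind fun T => (if Multiset.card S = m then K T else PMF.pure (S - T)).map (S + ·)

lemma isAdditive_refill (Vs : Adversary X) (m : ℕ) (K : Multiset X → PMF (Multiset X)) :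
    IsAdditive (refill Vs m K) := by
  intro S U hU
  obtain ⟨T, -, hU⟩ := (PMF.mem_support_bind_iff _ _ _).1 hU
  obtain ⟨R, -, rfl⟩ := (PMF.mem_support_map_iff _ _ _).1 hU
  exact Multiset.le_add_right S R

lemma advPush_refill (hVs : IsSubtractive Vs) {P : PMF (Multiset X)} {m : ℕ}
    (hP : ∀ S ∈ P.support, Multiset.card S = m) (fb K : Multiset X → PMF (Multiset X)) :
    advPush (refill Vs m K) P = (advPush Vs P).bind fun T =>
      (condRemoved Vs P fb T).bind fun R => (K T).map (T + R + ·) := by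
  rw [← map_fst_keptRemoved Vs P, condRemoved, bind_condSnd, keptRemoved, PMF.bind_bind, advPush]
  refine P.bind_congr_of_mem_support fun S hS => ?_
  simp only [refill, hP S hS, ↓reduceIte, PMF.bind_map]
  refine (Vs S).bind_congr_of_mem_support fun T hT => ?_
  simp only [Function.comp_apply, add_tsub_cancel_of_le (hVs S T hT)]

lemma tv_advPush_refill_le (hVs : IsSubtractive Vs) {P P' : PMF (Multiset X)} {m : ℕ}
    (hP : ∀ S ∈ P.support, Multiset.card S = m)
    (hP' : ∀ S ∈ P'.support, Multiset.card S = m)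
    (fb : Multiset X → PMF (Multiset X)) :
    tv (advPush (refill Vs m (condRemoved Vs P' fb)) P)
        (advPush (refill Vs m (condRemoved Vs P fb)) P') ≤
      tv (advPush Vs P) (advPush Vs P') := by
  rw [advPush_refill hVs hP fb, advPush_refill hVs hP' fb]
  convert tv_bind_le (advPush Vs P) (advPush Vs P') _ using 3
  ext T : 1
  simp only [← PMF.bind_pure_comp]
  rw [PMF.bind_comm]
  simp only [Function.comp_def, add_right_comm]

lemma fixedBudgetAdd_refill (hVs : IsSubtractive Vs) {η : ℝ} (hη : 0 ≤ η)
    (hbudget : FixedBudgetSub Vs η) {m : ℕ} {K : Multiset X → PMF (Multiset X)}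
    (hK : ∀ T, ∀ R ∈ (K T).support, Multiset.card R = m - Multiset.card T) :
    FixedBudgetAdd (refill Vs m K) η := by
  obtain ⟨c, hc, hcb⟩ := hbudget
  have hc_le : ∀ n, c n ≤ n := fun n => by
    have hlt : (c n : ℝ) < n + 1 := by
      linarith [(hcb n).1, mul_nonneg hη (Nat.cast_nonneg (α := ℝ) n)]
    exact Nat.lt_succ_iff.1 (by exact_mod_cast hlt)
  refine ⟨fun n => n + (n - c n), fun S U hU => ?_, fun n => ?_⟩
  · obtain ⟨T, hT, hU⟩ := (PMF.mem_support_bind_iff _ _ _).1 hU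
    obtain ⟨R, hR, rfl⟩ := (PMF.mem_support_map_iff _ _ _).1 hU
    dsimp only
    rw [Multiset.card_add, ← hc S T hT]
    split_ifs at hR with hS
    · rw [hK T R hR, hS]
    · rw [(PMF.mem_support_pure_iff _ _).1 hR, Multiset.card_sub (hVs S T hT)]
  · push_cast [hc_le n]
    constructor <;> linarith [hcb n]

end Refill

theorem stmt7_general {X : Type*} (Vs : Adversary X)
    (hVs : IsSubtractive Vs) (ζ : ℝ) (m : ℕ)
    (p : PMF X) (Q : PMF (PMF X))
    (hclose : tv (advPush Vs (metaSample Q m)) (advPush Vs (iid p m)) < ζ) :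
    ∃ VaddP VaddQ : Adversary X, IsAdditive VaddP ∧ IsAdditive VaddQ ∧
      tv (advPush VaddP (metaSample Q m)) (advPush VaddQ (iid p m)) < ζ ∧
      ∀ η : ℝ, 0 < η → η < 1 / 2 → FixedBudgetSub Vs η →
        ∃ η1 η2 : ℝ, 0 ≤ η1 ∧ η1 ≤ η ∧ 0 ≤ η2 ∧ η2 ≤ η ∧
          FixedBudgetAdd VaddP η1 ∧ FixedBudgetAdd VaddQ η2 := by
  classical
  obtain ⟨x₀, -⟩ := p.support_nonempty
  let fb (T : Multiset X) : PMF (Multiset X) :=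
    PMF.pure (Multiset.replicate (m - Multiset.card T) x₀)
  have hfb : ∀ T, ∀ R ∈ (fb T).support, Multiset.card R = m - Multiset.card T :=
    fun T R hR => by rw [(PMF.mem_support_pure_iff _ _).1 hR, Multiset.card_replicate]
  have hQm := card_of_mem_support_metaSample Q m
  have hpm := card_of_mem_support_iid p m
  refine ⟨refill Vs m (condRemoved Vs (iid p m) fb),
    refill Vs m (condRemoved Vs (metaSample Q m) fb), isAdditive_refill _ _ _,
    isAdditive_refill _ _ _, (tv_advPush_refill_le hVs hQm hpm fb).trans_lt hclose,
    fun η hη _ hbudget => ⟨η, η, hη.le, le_rfl, hη.le, le_rfl, ?_, ?_⟩⟩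
  · exact fixedBudgetAdd_refill hVs hη.le hbudget (card_of_mem_support_condRemoved hVs hpm hfb)
  · exact fixedBudgetAdd_refill hVs hη.le hbudget (card_of_mem_support_condRemoved hVs hQm hfb)

/-- If a subtractive adversary `V_sub` makes `|Q|^m` and `p^m`
ζ-indistinguishable, then there are additive adversaries `V_{add,p^m}` (applied to `|Q|^m`)
and `V_{add,|Q|^m}` (applied to `p^m`) achieving the same; moreover if `V_sub` has fixed
constant budget `η < 1/2`, both additive adversaries have fixed constant budgets `≤ η`. -/
theorem stmt7 {X : Type*} [Countable X] (C : Set (PMF X)) (Vs : Adversary X)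
    (hVs : IsSubtractive Vs) (ζ : ℝ) (hζ : ζ ∈ Set.Ioo (0 : ℝ) 1) (m : ℕ)
    (p : PMF X) (hp : p ∈ C) (Q : PMF (PMF X)) (hQ : Q.support ⊆ C)
    (hclose : tv (advPush Vs (metaSample Q m)) (advPush Vs (iid p m)) < ζ) :
    ∃ VaddP VaddQ : Adversary X, IsAdditive VaddP ∧ IsAdditive VaddQ ∧
      tv (advPush VaddP (metaSample Q m)) (advPush VaddQ (iid p m)) < ζ ∧
      ∀ η : ℝ, 0 < η → η < 1 / 2 → FixedBudgetSub Vs η →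
        ∃ η1 η2 : ℝ, 0 ≤ η1 ∧ η1 ≤ η ∧ 0 ≤ η2 ∧ η2 ≤ η ∧
          FixedBudgetAdd VaddP η1 ∧ FixedBudgetAdd VaddQ η2 :=
  stmt7_general Vs hVs ζ m p Q hclose
end
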